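/- If a graph G has an H-partition of layered width at most ℓ for some graph H, then G is isomorphic to a subgraph of the strong product H ⊠ P ⊠ K_ℓ for some path P. Conversely, if G is a subgraph of H ⊠ P ⊠ K_ℓ for some path P, then G has an H-partition of layered width at most ℓ. -/

import Mathlib

open SimpleGraph Set

/-- A layering of a graph: an ordered partition `(L 0, L 1, …)` of the vertex set
such that every edge joins vertices in the same or consecutive layers. -/
def IsLayering {α : Type} (G : SimpleGraph α) (L : ℕ → Set α) : Prop :=
  (∀ v, ∃! i, v ∈ L i) ∧
  ∀ ⦃v w : α⦄, G.Adj v w → ∀ ⦃i j : ℕ⦄, v ∈ L i → w ∈ L j → i ≤ j + 1 ∧ j ≤ i + 1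

/-- A tree-decomposition of `G` with tree `tG` and bags `B`. -/
def IsTreeDecomp {α T : Type} (G : SimpleGraph α) (tG : SimpleGraph T) (B : T → Set α) : Prop :=
  tG.IsTree ∧
  (∀ v : α, (tG.induce {x | v ∈ B x}).Connected) ∧
  (∀ ⦃v w : α⦄, G.Adj v w → ∃ x, v ∈ B x ∧ w ∈ B x)

/-- `G` has treewidth (strictly) less than `k`: a tree-decomposition with bags of size at most `k`. -/
def TreewidthLT {α : Type} (G : SimpleGraph α) (k : ℕ) : Prop :=
  ∃ (T : Type) (tG : SimpleGraph T) (B : T → Set α),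
    IsTreeDecomp G tG B ∧ ∀ x, (B x).encard ≤ k

/-- `G` has treewidth at most `t`. -/
def TreewidthAtMost {α : Type} (G : SimpleGraph α) (t : ℕ) : Prop :=
  TreewidthLT G (t + 1)

/-- Maximum degree at most `Δ`. -/
def MaxDegreeLE {α : Type} (G : SimpleGraph α) (Δ : ℕ) : Prop :=
  ∀ v, (G.neighborSet v).encard ≤ Δ

/-- A colouring `f` has clustering at most `s`: every monochromatic component
(the set of vertices joined to `v` by a monochromatic walk) has at most `s` vertices. -/
def HasClustering {α β : Type} (G : SimpleGraph α) (f : α → β) (s : ℕ) : Prop :=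
  ∀ v : α, {w | ∃ p : G.Walk v w, ∀ u ∈ p.support, f u = f v}.encard ≤ s

/-- Quotient graph of a graph by an indexed partition. -/
def QuotGraph {α ι : Type} (G : SimpleGraph α) (P : ι → Set α) : SimpleGraph ι where
  Adj x y := x ≠ y ∧ ∃ v w, v ∈ P x ∧ w ∈ P y ∧ G.Adj v w
  symm := by constructor; rintro x y ⟨h, v, w, hv, hw, hvw⟩; exact ⟨h.symm, w, v, hw, hv, hvw.symm⟩
  loopless := by constructor; rintro x ⟨h, _⟩; exact h rfl

/-- The strong product of two graphs. -/
def StrongProd {α β : Type} (A : SimpleGraph α) (B : SimpleGraph β) : SimpleGraph (α × β) where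
  Adj x y := x ≠ y ∧ (x.1 = y.1 ∨ A.Adj x.1 y.1) ∧ (x.2 = y.2 ∨ B.Adj x.2 y.2)
  symm := by
    constructor
    rintro x y ⟨h, h1, h2⟩
    exact ⟨h.symm, h1.imp Eq.symm Adj.symm, h2.imp Eq.symm Adj.symm⟩
  loopless := by constructor; rintro x ⟨h, _⟩; exact h rfl

/-- The one-way infinite path on `ℕ`. -/
def NatPath : SimpleGraph ℕ where
  Adj i j := j = i + 1 ∨ i = j + 1
  symm := by constructor; rintro i j (h | h); exacts [Or.inr h, Or.inl h]
  loopless := by constructor; rintro i (h | h) <;> omega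

/-- The `p`-th power of a graph: join vertices at distance between 1 and `p`. -/
def PowerGraph {α : Type} (G : SimpleGraph α) (p : ℕ) : SimpleGraph α where
  Adj v w := v ≠ w ∧ ∃ q : G.Walk v w, q.length ≤ p
  symm := by constructor; rintro v w ⟨h, q, hq⟩; exact ⟨h.symm, q.reverse, by simpa using hq⟩
  loopless := by constructor; rintro v ⟨h, _⟩; exact h rfl

/-- `G` has layered treewidth at most `k`. -/
def LayeredTreewidthLE {α : Type} (G : SimpleGraph α) (k : ℕ) : Prop :=
  ∃ (T : Type) (tG : SimpleGraph T) (B : T → Set α) (L : ℕ → Set α),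
    IsTreeDecomp G tG B ∧ IsLayering G L ∧ ∀ x i, (B x ∩ L i).encard ≤ k

/-- An `H`-partition of `G`: parts indexed by vertices of `H` such that every edge of `G`
lies within a part or between parts adjacent in `H`. -/
def IsGraphPartition {α ι : Type} (G : SimpleGraph α) (H : SimpleGraph ι) (A : ι → Set α) : Prop :=
  (∀ v, ∃! x, v ∈ A x) ∧
  ∀ ⦃v w : α⦄, G.Adj v w → ∀ ⦃x y : ι⦄, v ∈ A x → w ∈ A y → x = y ∨ H.Adj x y

/-- A `(k,ℓ)`-partition: a partition into nonempty parts whose quotient has treewidth at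
most `k`, having layered width at most `ℓ` with respect to some layering. -/
def HasKLPartition {α : Type} (G : SimpleGraph α) (k ℓ : ℕ) : Prop :=
  ∃ (ι : Type) (P : ι → Set α),
    (∀ v, ∃! x, v ∈ P x) ∧ (∀ x, (P x).Nonempty) ∧
    TreewidthAtMost (QuotGraph G P) k ∧
    ∃ L, IsLayering G L ∧ ∀ x i, (P x ∩ L i).encard ≤ ℓ


/-!
An `H`-partition is the same thing as a map `G → H` that sends every edge to an edge or to a
single vertex, and a layering is such a map `G → P`. Layered width at most `ℓ` says that the
fibres of the combined map `v ↦ (part, layer)` have at most `ℓ` vertices, which is exactly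
what is needed to add a third coordinate in `Fin ℓ` making the map injective. Adjacency in a
strong product is "equal or adjacent" in every coordinate, and injectivity rules out equality
at the ends of an edge.
-/

open Function

section WeakHom

variable {α β : Type*} {G : SimpleGraph α}

def IsWeakHom (G : SimpleGraph α) (H : SimpleGraph β) (f : α → β) : Prop :=
  ∀ ⦃v w⦄, G.Adj v w → f v = f w ∨ H.Adj (f v) (f w)

theorem IsWeakHom.adj_of_injective {H : SimpleGraph β} {f : α → β} (hf : IsWeakHom G H f)
    (hinj : Injective f) {v w : α} (h : G.Adj v w) : H.Adj (f v) (f w) :=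
  (hf h).resolve_left (hinj.ne h.ne)

theorem isWeakHom_top (f : α → β) : IsWeakHom G ⊤ f :=
  fun v w _ => (em (f v = f w)).imp_right id

theorem strongProd_eq_or_adj_iff {β γ : Type} {A : SimpleGraph β} {B : SimpleGraph γ}
    {x y : β × γ} :
    x = y ∨ (StrongProd A B).Adj x y ↔
      (x.1 = y.1 ∨ A.Adj x.1 y.1) ∧ (x.2 = y.2 ∨ B.Adj x.2 y.2) := by
  by_cases hxy : x = y
  · simp [hxy]
  · simp [StrongProd, hxy]

theorem isWeakHom_strongProd_iff {β γ : Type} {A : SimpleGraph β} {B : SimpleGraph γ}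
    {f : α → β × γ} :
    IsWeakHom G (StrongProd A B) f ↔
      IsWeakHom G A (Prod.fst ∘ f) ∧ IsWeakHom G B (Prod.snd ∘ f) := by
  simp only [IsWeakHom, strongProd_eq_or_adj_iff, comp_apply]
  exact ⟨fun h => ⟨fun v w hvw => (h hvw).1, fun v w hvw => (h hvw).2⟩,
    fun h v w hvw => ⟨h.1 hvw, h.2 hvw⟩⟩

end WeakHom

theorem natPath_eq_or_adj_iff {i j : ℕ} : i = j ∨ NatPath.Adj i j ↔ i ≤ j + 1 ∧ j ≤ i + 1 := by
  simp only [NatPath]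
  omega

section Fibres

variable {α β γ : Type*}

theorem existsUnique_mem_fiber (f : α → β) (v : α) : ∃! b, v ∈ {w | f w = b} :=
  ⟨f v, rfl, fun _ h => h.symm⟩

theorem exists_eq_fiber_of_existsUnique_mem {A : β → Set α} (h : ∀ v, ∃! b, v ∈ A b) :
    ∃ f : α → β, A = fun b => {v | f v = b} := by
  choose f hf hunique using h
  exact ⟨f, funext fun b => Set.ext fun v => ⟨fun hv => (hunique v b hv).symm, fun h => h ▸ hf v⟩⟩

theorem encard_fiber_le_of_injective {f : α → β} {ℓ : ℕ} {c : α → Fin ℓ}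
    (hinj : Injective fun v => (f v, c v)) (b : β) : {v | f v = b}.encard ≤ ℓ := by
  have hc : InjOn c {v | f v = b} := fun v hv w hw hvw => hinj (Prod.ext (hv.trans hw.symm) hvw)
  simpa using encard_le_encard_of_injOn (mapsTo_univ c _) hc

theorem exists_injective_of_encard_fiber_le {f : α → β} {ℓ : ℕ}
    (h : ∀ b, {v | f v = b}.encard ≤ ℓ) : ∃ c : α → Fin ℓ, Injective fun v => (f v, c v) := by
  have hemb (b : β) : Nonempty ({v | f v = b} ↪ Fin ℓ) := by
    obtain ⟨hfin, hcard⟩ := encard_le_coe_iff_finite_ncard_le.1 (h b)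
    have := hfin.fintype
    apply Function.Embedding.nonempty_of_card_le
    rwa [Fintype.card_fin, ← Nat.card_eq_fintype_card, Nat.card_coe_set_eq]
  let e (b : β) : {v | f v = b} ↪ Fin ℓ := (hemb b).some
  let c (v : α) : Fin ℓ := e (f v) ⟨v, rfl⟩
  have hc (b : β) : ∀ u : {v | f v = b}, c u = e b u := by rintro ⟨u, rfl⟩; rfl
  refine ⟨c, fun v w hvw => ?_⟩
  obtain ⟨hf, hcvw⟩ := Prod.mk.inj hvw
  rw [hc (f w) ⟨v, hf⟩, hc (f w) ⟨w, rfl⟩] at hcvw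
  exact congrArg Subtype.val ((e (f w)).injective hcvw)

theorem fiber_inter_fiber (f : α → β) (g : α → γ) (b : β) (c : γ) :
    {v | f v = b} ∩ {v | g v = c} = {v | (f v, g v) = (b, c)} := by
  simp [ofPred_and]

end Fibres

theorem isGraphPartition_iff {α ι : Type} {G : SimpleGraph α} {H : SimpleGraph ι}
    {A : ι → Set α} :
    IsGraphPartition G H A ↔ ∃ f : α → ι, A = (fun x => {v | f v = x}) ∧ IsWeakHom G H f := by
  constructor
  · rintro ⟨hpart, hadj⟩
    obtain ⟨f, rfl⟩ := exists_eq_fiber_of_existsUnique_mem hpart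
    exact ⟨f, rfl, fun v w hvw => hadj hvw rfl rfl⟩
  · rintro ⟨f, rfl, hf⟩
    refine ⟨existsUnique_mem_fiber f, fun v w hvw x y hx hy => ?_⟩
    subst hx hy
    exact hf hvw

theorem isLayering_iff_isGraphPartition {α : Type} {G : SimpleGraph α} {L : ℕ → Set α} :
    IsLayering G L ↔ IsGraphPartition G NatPath L := by
  simp only [IsLayering, IsGraphPartition, natPath_eq_or_adj_iff]

/-- `G` has an `H`-partition of layered width at most `ℓ` if and only if `G` is
(isomorphic to) a subgraph of the strong product `H ⊠ P ⊠ K_ℓ`, where `P` is the path on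
`{0,1,2,…}`. -/
theorem stmt5 {α ι : Type} (G : SimpleGraph α) (H : SimpleGraph ι) (ℓ : ℕ) :
    (∃ A : ι → Set α, IsGraphPartition G H A ∧
      ∃ L, IsLayering G L ∧ ∀ x i, (A x ∩ L i).encard ≤ ℓ) ↔
    (∃ φ : α → ι × ℕ × Fin ℓ, Function.Injective φ ∧ ∀ ⦃v w⦄, G.Adj v w →
      (StrongProd H (StrongProd NatPath (completeGraph (Fin ℓ)))).Adj (φ v) (φ w)) := by
  constructor
  · rintro ⟨_, hA, _, hL, hwidth⟩
    obtain ⟨x, rfl, hx⟩ := isGraphPartition_iff.1 hA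
    obtain ⟨i, rfl, hi⟩ := isGraphPartition_iff.1 (isLayering_iff_isGraphPartition.1 hL)
    obtain ⟨c, hc⟩ := exists_injective_of_encard_fiber_le (f := fun v => (x v, i v))
      fun p => fiber_inter_fiber x i p.1 p.2 ▸ hwidth p.1 p.2
    have hinj : Injective fun v => (x v, i v, c v) :=
      (Equiv.prodAssoc ι ℕ (Fin ℓ)).injective.comp hc
    have hweak : IsWeakHom G (StrongProd H (StrongProd NatPath ⊤)) fun v => (x v, i v, c v) :=
      isWeakHom_strongProd_iff.2 ⟨hx, isWeakHom_strongProd_iff.2 ⟨hi, isWeakHom_top _⟩⟩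
    exact ⟨_, hinj, fun v w => hweak.adj_of_injective hinj⟩
  · rintro ⟨φ, hinj, hφ⟩
    obtain ⟨hx, hrest⟩ := isWeakHom_strongProd_iff.1 fun v w hvw => Or.inr (hφ hvw)
    obtain ⟨hi, -⟩ := isWeakHom_strongProd_iff.1 hrest
    refine ⟨_, isGraphPartition_iff.2 ⟨_, rfl, hx⟩,
      _, isLayering_iff_isGraphPartition.2 (isGraphPartition_iff.2 ⟨_, rfl, hi⟩), fun a b => ?_⟩
    rw [fiber_inter_fiber]
    exact encard_fiber_le_of_injective ((Equiv.prodAssoc ι ℕ (Fin ℓ)).symm.injective.comp hinj) _
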